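/- Let A be an n×n complex matrix, let V_{m+1} be an n×(m+1) matrix with orthonormal columns whose first m columns form V_m, let H̄_m be an (m+1)×m complex matrix with A V_m = V_{m+1} H̄_m, and suppose r₀ = β V_{m+1} e₁ for some β ∈ ℂ, where e₁ is the first standard basis vector of ℂ^{m+1}. Then for every y ∈ ℂᵐ, ‖r₀ − A V_m y‖₂ = ‖β e₁ − H̄_m y‖₂; consequently minimizing ‖b − A(x₀ + t)‖₂ over t ∈ range(V_m) is equivalent to minimizing ‖H̄_m y − β e₁‖₂ over y ∈ ℂᵐ. -/

import Mathlib

/-!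
The Arnoldi relation and `r₀ = β V_{m+1} e₁` write the residual `r₀ − A V_m y` as
`V_{m+1} (β e₁ − H̄_m y)`, and a matrix with orthonormal columns preserves the Euclidean norm.
The GMRES objective `‖b − A (x₀ + V_m y)‖₂` is that same residual norm.
-/

open Matrix

/-- Euclidean (2-) norm of a complex vector. -/
noncomputable def enorm {ι : Type*} [Fintype ι] (v : ι → ℂ) : ℝ :=
  ‖(WithLp.equiv 2 (ι → ℂ)).symm v‖

section EuclideanNorm

variable {ι κ : Type*} [Fintype ι] [Fintype κ]

lemma enorm_eq_sqrt_re_star_dotProduct (v : ι → ℂ) :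
    _root_.enorm v = √(star v ⬝ᵥ v).re := by
  rw [_root_.enorm, EuclideanSpace.norm_eq]
  congr 1
  simp [dotProduct, Complex.sq_norm, Complex.normSq_apply]

lemma enorm_mulVec_of_conjTranspose_mul_self_eq_one [DecidableEq κ] (V : Matrix ι κ ℂ)
    (hV : Vᴴ * V = 1) (w : κ → ℂ) : _root_.enorm (V *ᵥ w) = _root_.enorm w := by
  rw [enorm_eq_sqrt_re_star_dotProduct, enorm_eq_sqrt_re_star_dotProduct, star_mulVec,
    dotProduct_mulVec, vecMul_vecMul, hV, vecMul_one]

lemma enorm_sub_comm (v w : ι → ℂ) : _root_.enorm (v - w) = _root_.enorm (w - v) := by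
  simp only [_root_.enorm, WithLp.equiv_symm_apply, WithLp.toLp_sub, norm_sub_rev]

end EuclideanNorm

theorem gmres_least_squares_reduction_general {n m : ℕ}
    (A : Matrix (Fin n) (Fin n) ℂ)
    (V₁ : Matrix (Fin n) (Fin (m + 1)) ℂ)
    (hOrth : V₁ᴴ * V₁ = 1)
    (Vm : Matrix (Fin n) (Fin m) ℂ)
    (H : Matrix (Fin (m + 1)) (Fin m) ℂ)
    (hArnoldi : A * Vm = V₁ * H)
    (b x₀ r₀ : Fin n → ℂ) (β : ℂ)
    (hr₀ : r₀ = b - A.mulVec x₀)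
    (hcol : r₀ = β • V₁.mulVec (Pi.single 0 1)) :
    (∀ y : Fin m → ℂ,
        _root_.enorm (r₀ - (A * Vm).mulVec y) =
          _root_.enorm (β • (Pi.single 0 1 : Fin (m + 1) → ℂ) - H.mulVec y)) ∧
      ∀ y : Fin m → ℂ,
        (∀ z : Fin m → ℂ,
            _root_.enorm (b - A.mulVec (x₀ + Vm.mulVec y)) ≤
              _root_.enorm (b - A.mulVec (x₀ + Vm.mulVec z))) ↔
          (∀ z : Fin m → ℂ,
            _root_.enorm (H.mulVec y - β • (Pi.single 0 1 : Fin (m + 1) → ℂ)) ≤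
              _root_.enorm (H.mulVec z - β • (Pi.single 0 1 : Fin (m + 1) → ℂ))) := by
  have hresidual : ∀ y : Fin m → ℂ,
      r₀ - (A * Vm) *ᵥ y = V₁ *ᵥ (β • (Pi.single 0 1 : Fin (m + 1) → ℂ) - H *ᵥ y) := by
    intro y
    rw [hcol, hArnoldi, ← mulVec_mulVec, mulVec_sub, mulVec_smul]
  have hprojected : ∀ y : Fin m → ℂ, _root_.enorm (r₀ - (A * Vm) *ᵥ y) =
      _root_.enorm (β • (Pi.single 0 1 : Fin (m + 1) → ℂ) - H *ᵥ y) := fun y => by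
    rw [hresidual, enorm_mulVec_of_conjTranspose_mul_self_eq_one V₁ hOrth]
  have hcorrection : ∀ z : Fin m → ℂ, b - A *ᵥ (x₀ + Vm *ᵥ z) = r₀ - (A * Vm) *ᵥ z := by
    intro z
    rw [hr₀, ← mulVec_mulVec, mulVec_add]
    abel
  have hobjective : ∀ z : Fin m → ℂ, _root_.enorm (b - A *ᵥ (x₀ + Vm *ᵥ z)) =
      _root_.enorm (H *ᵥ z - β • (Pi.single 0 1 : Fin (m + 1) → ℂ)) := fun z => by
    rw [hcorrection, hprojected, enorm_sub_comm]
  exact ⟨hprojected, fun y => by simp only [hobjective]⟩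

/-- With `V_{m+1}` having orthonormal columns, first `m` columns `V_m`,
Arnoldi relation `A V_m = V_{m+1} H̄_m`, and `r₀ = b − A x₀ = β V_{m+1} e₁`, we have
`‖r₀ − A V_m y‖₂ = ‖β e₁ − H̄_m y‖₂` for every `y ∈ ℂᵐ`; consequently minimizing
`‖b − A(x₀ + V_m y)‖₂` is equivalent to minimizing `‖H̄_m y − β e₁‖₂`. -/
theorem gmres_least_squares_reduction {n m : ℕ}
    (A : Matrix (Fin n) (Fin n) ℂ)
    (V₁ : Matrix (Fin n) (Fin (m + 1)) ℂ)
    (hOrth : V₁ᴴ * V₁ = 1)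
    (Vm : Matrix (Fin n) (Fin m) ℂ)
    (hV : Vm = V₁.submatrix id Fin.castSucc)
    (H : Matrix (Fin (m + 1)) (Fin m) ℂ)
    (hArnoldi : A * Vm = V₁ * H)
    (b x₀ r₀ : Fin n → ℂ) (β : ℂ)
    (hr₀ : r₀ = b - A.mulVec x₀)
    (hcol : r₀ = β • V₁.mulVec (Pi.single 0 1)) :
    (∀ y : Fin m → ℂ,
        _root_.enorm (r₀ - (A * Vm).mulVec y) =
          _root_.enorm (β • (Pi.single 0 1 : Fin (m + 1) → ℂ) - H.mulVec y)) ∧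
      ∀ y : Fin m → ℂ,
        (∀ z : Fin m → ℂ,
            _root_.enorm (b - A.mulVec (x₀ + Vm.mulVec y)) ≤
              _root_.enorm (b - A.mulVec (x₀ + Vm.mulVec z))) ↔
          (∀ z : Fin m → ℂ,
            _root_.enorm (H.mulVec y - β • (Pi.single 0 1 : Fin (m + 1) → ℂ)) ≤
              _root_.enorm (H.mulVec z - β • (Pi.single 0 1 : Fin (m + 1) → ℂ))) :=
  gmres_least_squares_reduction_general A V₁ hOrth Vm H hArnoldi b x₀ r₀ β hr₀ hcol
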